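/- arXiv:2301.04127 — 2 statements merged into one kernel-verified Lean document; each statement's English description precedes it below -/
import Mathlib

section
/- Let (S,h) be an admissible 4-polarized lattice. Then for any two distinct lines l, m ∈ root₁(S,h) one has ⟨l,m⟩ ∈ {−1, 0, 1}; if moreover no root r ∈ root₀(S,h) separates l and m (i.e., there is no r with ⟨r,r⟩ = −2, ⟨r,h⟩ = 0, ⟨r,l⟩ > 0 and ⟨r,m⟩ < 0), then ⟨l,m⟩ ∈ {0, 1}. -/
/-!
Common definitions: 4-polarized lattices, lines, roots, Fano graphs
(following Degtyarev–Rams, "Counting lines with Vinberg's algorithm").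
-/

namespace K3

variable {S : Type*} [AddCommGroup S] [Module ℤ S]

/-- `root₁(S,h)`: the *lines* of a 4-polarized lattice. -/
def root1 (B : S →ₗ[ℤ] S →ₗ[ℤ] ℤ) (h : S) : Set S :=
  {l : S | B l l = -2 ∧ B l h = 1}

/-- `root₀(S,h)`: the *roots* of a 4-polarized lattice. -/
def root0 (B : S →ₗ[ℤ] S →ₗ[ℤ] ℤ) (h : S) : Set S :=
  {r : S | B r r = -2 ∧ B r h = 0}

/-- `(S,B,h)` is a 4-polarized lattice: `S` is a finitely generated free ℤ-module, `B`
a symmetric bilinear form, `⟨h,h⟩ = 4`, and `⟨v,v⟩ < 0` for nonzero `v ⊥ h`. -/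
structure IsPolarized (B : S →ₗ[ℤ] S →ₗ[ℤ] ℤ) (h : S) : Prop where
  free : Module.Free ℤ S
  finite : Module.Finite ℤ S
  symm : ∀ u v : S, B u v = B v u
  deg : B h h = 4
  hyperbolic : ∀ v : S, v ≠ 0 → B v h = 0 → B v v < 0

/-- Admissibility: there is no `u` with `⟨u,u⟩ = 0` and `⟨u,h⟩ = 2`. -/
def IsAdmissible (B : S →ₗ[ℤ] S →ₗ[ℤ] ℤ) (h : S) : Prop :=
  ¬ ∃ u : S, B u u = 0 ∧ B u h = 2

/-- The E₈ Cartan matrix (Bourbaki numbering of the Dynkin diagram). -/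
def e8Cartan : Matrix (Fin 8) (Fin 8) ℤ :=
  !![2,0,-1,0,0,0,0,0;
     0,2,0,-1,0,0,0,0;
     -1,0,2,-1,0,0,0,0;
     0,-1,-1,2,-1,0,0,0;
     0,0,0,-1,2,-1,0,0;
     0,0,0,0,-1,2,-1,0;
     0,0,0,0,0,-1,2,-1;
     0,0,0,0,0,0,-1,2]

/-- The Gram matrix of `L := E₈ ⊕ E₈ ⊕ U ⊕ U ⊕ U`, where `E₈` is *negative* definite
(Gram matrix the negative of the E₈ Cartan matrix) and `U` has Gram matrix `[[0,1],[1,0]]`. -/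
def LGram : Matrix (Fin 22) (Fin 22) ℤ := fun i j =>
  if hi : (i : ℕ) < 8 then
    (if hj : (j : ℕ) < 8 then -e8Cartan ⟨i, hi⟩ ⟨j, hj⟩ else 0)
  else if hi' : (i : ℕ) < 16 then
    (if hj' : 8 ≤ (j : ℕ) ∧ (j : ℕ) < 16 then
      -e8Cartan ⟨(i : ℕ) - 8, by omega⟩ ⟨(j : ℕ) - 8, by omega⟩ else 0)
  else
    (if 16 ≤ (j : ℕ) ∧ (i : ℕ) / 2 = (j : ℕ) / 2 ∧ i ≠ j then 1 else 0)

/-- A geometric 4-polarized lattice: admissible, even, and admitting a primitive isometric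
embedding into `L = 2E₈ ⊕ 3U` (primitive = the quotient by the image is torsion-free). -/
structure IsGeometric (B : S →ₗ[ℤ] S →ₗ[ℤ] ℤ) (h : S) extends IsPolarized B h : Prop where
  admissible : IsAdmissible B h
  even : ∀ v : S, Even (B v v)
  embeds : ∃ f : S →ₗ[ℤ] (Fin 22 → ℤ), Function.Injective f ∧
    (∀ u v : S, B u v = ∑ i, ∑ j, f u i * LGram i j * f v j) ∧
    (∀ (x : Fin 22 → ℤ) (n : ℤ), n ≠ 0 → n • x ∈ LinearMap.range f →
      x ∈ LinearMap.range f)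

/-- A ℤ-linear functional is *Weyl-generic* if it does not vanish on any root. -/
def WeylGeneric (B : S →ₗ[ℤ] S →ₗ[ℤ] ℤ) (h : S) (φ : S →ₗ[ℤ] ℤ) : Prop :=
  ∀ r ∈ root0 B h, φ r ≠ 0

/-- The vertex set of the Fano graph `Fn_φ(S,h)`. -/
def fanoVerts (B : S →ₗ[ℤ] S →ₗ[ℤ] ℤ) (h : S) (φ : S →ₗ[ℤ] ℤ) : Set S :=
  {l ∈ root1 B h | ∀ r ∈ root0 B h, 0 < φ r → 0 ≤ B l r}

/-- The set `Γ` together with `h` spans `S ⊗ ℚ`; since `S` is free, this is equivalent to: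
every `s : S` has a nonzero integer multiple in the ℤ-span of `Γ ∪ {h}`. -/
def QSpannedByLines (Γ : Set S) (h : S) : Prop :=
  ∀ s : S, ∃ n : ℤ, n ≠ 0 ∧ n • s ∈ Submodule.span ℤ (Γ ∪ {h})

/-- The Fano graph as a simple graph on `Γ`: distinct `u, v` adjacent iff `⟨u,v⟩ = 1`. -/
def fanoGraph (B : S →ₗ[ℤ] S →ₗ[ℤ] ℤ) (Γ : Set S) : SimpleGraph Γ where
  Adj u v := u ≠ v ∧ B u.1 v.1 = 1 ∧ B v.1 u.1 = 1
  symm := ⟨by intro u v hadj; exact ⟨hadj.1.symm, hadj.2.2, hadj.2.1⟩⟩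
  loopless := ⟨by intro u hadj; exact hadj.1 rfl⟩

/-- `Γ` has no separating roots: no root is positive on one element of `Γ` and negative
on another. -/
def NoSeparatingRoots (B : S →ₗ[ℤ] S →ₗ[ℤ] ℤ) (h : S) (Γ : Set S) : Prop :=
  ¬ ∃ r ∈ root0 B h, ∃ u ∈ Γ, ∃ v ∈ Γ, 0 < B r u ∧ B r v < 0

/-- A triangle in a set `Γ` of lines: three distinct elements pairwise of product `1`. -/
def IsTriangle (B : S →ₗ[ℤ] S →ₗ[ℤ] ℤ) (Γ : Set S) (c₁ c₂ c₃ : S) : Prop :=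
  c₁ ∈ Γ ∧ c₂ ∈ Γ ∧ c₃ ∈ Γ ∧ c₁ ≠ c₂ ∧ c₁ ≠ c₃ ∧ c₂ ≠ c₃ ∧
    B c₁ c₂ = 1 ∧ B c₁ c₃ = 1 ∧ B c₂ c₃ = 1

/-- Simple sections through `a` of the triangle `(a,b,c)`:
`sec a := {l ∈ Γ : ⟨l,a⟩ = 1, ⟨l,b⟩ = ⟨l,c⟩ = 0}`. -/
def sec (B : S →ₗ[ℤ] S →ₗ[ℤ] ℤ) (Γ : Set S) (a b c : S) : Set S :=
  {l ∈ Γ | B l a = 1 ∧ B l b = 0 ∧ B l c = 0}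

/-- The pencil of a triangle `(c₁,c₂,c₃)` in `Γ`. -/
def pencil (B : S →ₗ[ℤ] S →ₗ[ℤ] ℤ) (Γ : Set S) (c₁ c₂ c₃ : S) : Set S :=
  {c₁, c₂, c₃} ∪ {l ∈ Γ | B l c₁ = 0 ∧ B l c₂ = 0 ∧ B l c₃ = 0}

end K3

/-!
Both `l - m` and `2l + 2m - h` are orthogonal to `h`, so the hyperbolicity of `S` makes their
squares `-4 - 2⟨l,m⟩` and `8⟨l,m⟩ - 20` negative, resp. nonpositive: `-1 ≤ ⟨l,m⟩ ≤ 2`.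
The value `2` is excluded by admissibility, since `u = l + m` then has `u² = 0` and `u·h = 2`.
The value `-1` makes `m - l` a root with `(m - l)·l = 1` and `(m - l)·m = -1`, separating `l`
from `m`.
-/

namespace K3

section

variable {S : Type*} [AddCommGroup S] [Module ℤ S] {B : S →ₗ[ℤ] S →ₗ[ℤ] ℤ} {h l m : S}

theorem IsPolarized.apply_self_nonpos (hpol : IsPolarized B h) {v : S} (hv : B v h = 0) :
    B v v ≤ 0 := by
  rcases eq_or_ne v 0 with rfl | hv0
  · simp
  · exact (hpol.hyperbolic v hv0 hv).le

theorem IsPolarized.neg_one_le_of_mem_root1 (hpol : IsPolarized B h) (hl : l ∈ root1 B h)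
    (hm : m ∈ root1 B h) (hlm : l ≠ m) : -1 ≤ B l m := by
  have hperp : B (l - m) h = 0 := by
    simp only [map_sub, LinearMap.sub_apply, hl.2, hm.2, sub_self]
  have hsq : B (l - m) (l - m) = -4 - 2 * B l m := by
    simp only [map_sub, LinearMap.sub_apply, hl.1, hm.1, hpol.symm m l]
    ring
  have := hpol.hyperbolic _ (sub_ne_zero.mpr hlm) hperp
  omega

theorem IsPolarized.apply_le_two_of_mem_root1 (hpol : IsPolarized B h) (hl : l ∈ root1 B h)
    (hm : m ∈ root1 B h) : B l m ≤ 2 := by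
  have hperp : B (l + l + m + m - h) h = 0 := by
    simp only [map_add, map_sub, LinearMap.add_apply, LinearMap.sub_apply, hl.2, hm.2,
      hpol.deg]
    norm_num
  have hsq : B (l + l + m + m - h) (l + l + m + m - h) = 8 * B l m - 20 := by
    simp only [map_add, map_sub, LinearMap.add_apply, LinearMap.sub_apply, hl.1, hm.1, hl.2,
      hm.2, hpol.deg, hpol.symm m l, hpol.symm h l, hpol.symm h m]
    ring
  have := hpol.apply_self_nonpos hperp
  omega

theorem apply_ne_two_of_isAdmissible (hB : ∀ u v, B u v = B v u) (hadm : IsAdmissible B h)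
    (hl : l ∈ root1 B h) (hm : m ∈ root1 B h) : B l m ≠ 2 := by
  intro h2
  refine hadm ⟨l + m, ?_, ?_⟩
  · simp only [map_add, LinearMap.add_apply, hl.1, hm.1, hB m l, h2]
    norm_num
  · simp only [map_add, LinearMap.add_apply, hl.2, hm.2]
    norm_num

theorem exists_separating_root_of_apply_eq_neg_one (hB : ∀ u v, B u v = B v u)
    (hl : l ∈ root1 B h) (hm : m ∈ root1 B h) (h1 : B l m = -1) :
    ∃ r ∈ root0 B h, 0 < B r l ∧ B r m < 0 := by
  refine ⟨m - l, ⟨?_, ?_⟩, ?_, ?_⟩ <;>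
    simp only [map_sub, LinearMap.sub_apply, hl.1, hm.1, hl.2, hm.2, hB m l, h1] <;>
    norm_num

end

/-- In an admissible 4-polarized lattice, two distinct lines `l, m`
satisfy `⟨l,m⟩ ∈ {−1,0,1}`; if moreover no root separates `l` and `m`, then
`⟨l,m⟩ ∈ {0,1}`. -/
theorem distinct_lines_intersection
    {S : Type*} [AddCommGroup S] [Module ℤ S]
    (B : S →ₗ[ℤ] S →ₗ[ℤ] ℤ) (h : S)
    (hpol : IsPolarized B h) (hadm : IsAdmissible B h)
    (l m : S) (hl : l ∈ root1 B h) (hm : m ∈ root1 B h) (hlm : l ≠ m) :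
    B l m ∈ ({-1, 0, 1} : Set ℤ) ∧
    ((¬ ∃ r ∈ root0 B h, 0 < B r l ∧ B r m < 0) → B l m ∈ ({0, 1} : Set ℤ)) := by
  have hlow := hpol.neg_one_le_of_mem_root1 hl hm hlm
  have hup := hpol.apply_le_two_of_mem_root1 hl hm
  have hne_two := apply_ne_two_of_isAdmissible hpol.symm hadm hl hm
  simp only [Set.mem_insert_iff, Set.mem_singleton_iff]
  refine ⟨by omega, fun hnosep => ?_⟩
  have hne_neg_one : B l m ≠ -1 := fun h1 =>
    hnosep (exists_separating_root_of_apply_eq_neg_one hpol.symm hl hm h1)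
  omega

end K3
end

section
/- Let (S,h) be a 4-polarized lattice and let c₁,c₂,c₃ ∈ root₁(S,h) be a triangle. Then κ := c₁ + c₂ + c₃ satisfies ⟨κ,κ⟩ = 0 and κ ≠ 0, and the bilinear form is negative semidefinite on the ℚ-span (inside S ⊗ ℚ) of the pencil {c₁,c₂,c₃} ∪ {l ∈ root₁(S,h) : ⟨l,c₁⟩ = ⟨l,c₂⟩ = ⟨l,c₃⟩ = 0} (the pencil of a triangle is parabolic). -/
/-!
The sum `κ = c₁ + c₂ + c₃` of a triangle is isotropic with `⟨κ,h⟩ = 3`, and every line of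
the pencil is orthogonal to `κ` (for `cᵢ` itself, `-2 + 1 + 1 = 0`). For `v ⊥ κ` the vector
`3v - ⟨v,h⟩κ` is orthogonal to `h`, so hyperbolicity gives
`9⟨v,v⟩ = ⟨3v - ⟨v,h⟩κ, 3v - ⟨v,h⟩κ⟩ ≤ 0`.
-/

namespace K3

section

variable {S : Type*} [AddCommGroup S] [Module ℤ S] {B : S →ₗ[ℤ] S →ₗ[ℤ] ℤ} {h : S}

theorem self_nonpos_of_orthogonal
    (hyp : ∀ v : S, v ≠ 0 → B v h = 0 → B v v < 0) {v : S} (hv : B v h = 0) :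
    B v v ≤ 0 := by
  rcases eq_or_ne v 0 with rfl | hv0
  · simp
  · exact (hyp v hv0 hv).le

theorem self_nonpos_of_orthogonal_isotropic (hsymm : ∀ u v : S, B u v = B v u)
    (hyp : ∀ v : S, v ≠ 0 → B v h = 0 → B v v < 0) {κ : S} (hκκ : B κ κ = 0)
    (hκh : B κ h ≠ 0) {v : S} (hvκ : B v κ = 0) : B v v ≤ 0 := by
  set w := B κ h • v - B v h • κ
  have hwh : B w h = 0 := by
    simp only [w, map_sub, map_zsmul, LinearMap.sub_apply, LinearMap.smul_apply, smul_eq_mul]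
    ring
  have hww : B w w = B κ h ^ 2 * B v v := by
    simp only [w, map_sub, map_zsmul, LinearMap.sub_apply, LinearMap.smul_apply, smul_eq_mul,
      hvκ, hsymm κ v, hκκ]
    ring
  have hpos : 0 < B κ h ^ 2 := by positivity
  nlinarith [self_nonpos_of_orthogonal hyp hwh]

namespace IsTriangle

variable {c₁ c₂ c₃ : S}

theorem sum_apply_h (htri : IsTriangle B (root1 B h) c₁ c₂ c₃) : B (c₁ + c₂ + c₃) h = 3 := by
  obtain ⟨⟨-, h₁⟩, ⟨-, h₂⟩, ⟨-, h₃⟩, -⟩ := htri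
  simp only [map_add, LinearMap.add_apply, h₁, h₂, h₃]
  norm_num

theorem apply_sum_self (htri : IsTriangle B (root1 B h) c₁ c₂ c₃)
    (hsymm : ∀ u v : S, B u v = B v u) :
    B (c₁ + c₂ + c₃) (c₁ + c₂ + c₃) = 0 := by
  obtain ⟨⟨h₁, -⟩, ⟨h₂, -⟩, ⟨h₃, -⟩, -, -, -, h₁₂, h₁₃, h₂₃⟩ := htri
  simp only [map_add, LinearMap.add_apply, hsymm c₂ c₁, hsymm c₃ c₁, hsymm c₃ c₂]
  linarith

theorem span_pencil_le_ker (htri : IsTriangle B (root1 B h) c₁ c₂ c₃)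
    (hsymm : ∀ u v : S, B u v = B v u) :
    Submodule.span ℤ (pencil B (root1 B h) c₁ c₂ c₃) ≤
      LinearMap.ker (B.flip (c₁ + c₂ + c₃)) := by
  obtain ⟨⟨h₁, -⟩, ⟨h₂, -⟩, ⟨h₃, -⟩, -, -, -, h₁₂, h₁₃, h₂₃⟩ := htri
  rw [Submodule.span_le]
  intro l hl
  rw [SetLike.mem_coe, LinearMap.mem_ker, LinearMap.flip_apply, map_add, map_add]
  rcases hl with hl | ⟨-, hl₁, hl₂, hl₃⟩
  · have := hsymm c₂ c₁; have := hsymm c₃ c₁; have := hsymm c₃ c₂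
    simp only [Set.mem_insert_iff, Set.mem_singleton_iff] at hl
    rcases hl with rfl | rfl | rfl <;> linarith
  · rw [hl₁, hl₂, hl₃]
    rfl

end IsTriangle

end

-- Negative semidefiniteness on the ℚ-span of a subset of `S` is equivalent to negative
-- semidefiniteness on its ℤ-span.
/-- In a 4-polarized lattice, for a triangle `c₁,c₂,c₃` of lines,
`κ := c₁+c₂+c₃` is a nonzero isotropic vector, and the form is negative semidefinite on
the ℚ-span of the pencil of the triangle.  (Negative semidefiniteness on the ℚ-span of a
subset of `S` is equivalent to negative semidefiniteness on its ℤ-span.) -/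
theorem triangle_pencil_parabolic
    {S : Type*} [AddCommGroup S] [Module ℤ S]
    (B : S →ₗ[ℤ] S →ₗ[ℤ] ℤ) (h : S)
    (hpol : IsPolarized B h)
    (c₁ c₂ c₃ : S) (htri : IsTriangle B (root1 B h) c₁ c₂ c₃) :
    B (c₁ + c₂ + c₃) (c₁ + c₂ + c₃) = 0 ∧ c₁ + c₂ + c₃ ≠ 0 ∧
    ∀ v ∈ Submodule.span ℤ (pencil B (root1 B h) c₁ c₂ c₃), B v v ≤ 0 := by
  have hκκ := htri.apply_sum_self hpol.symm
  have hκh := htri.sum_apply_h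
  refine ⟨hκκ, fun h0 => by simp [h0] at hκh, fun v hv => ?_⟩
  exact self_nonpos_of_orthogonal_isotropic hpol.symm hpol.hyperbolic hκκ
    (by rw [hκh]; norm_num) (htri.span_pencil_le_ker hpol.symm hv)

end K3
end
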